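/- arXiv:1511.01438 — 3 statements merged into one kernel-verified Lean document; each statement's English description precedes it below -/
import Mathlib

section
/- Let n be even and a₁, a₂ : 𝔽₂ⁿ → 𝔽₂ be Boolean functions such that a₂ and a₁ ⊕ a₂ are both bent. Then f : 𝔽₂ⁿ → ℤ₄, f(x) = a₁(x) + 2a₂(x), is gbent, i.e., |H_f^{(4)}(u)| = 2^{n/2} for all u ∈ 𝔽₂ⁿ. -/
open Finset Complex

/-- Standard inner product on `𝔽₂ⁿ`. -/
def ip {n : ℕ} (u x : Fin n → ZMod 2) : ZMod 2 := ∑ i, u i * x i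

/-- Walsh–Hadamard transform of a Boolean function. -/
noncomputable def WHT {n : ℕ} (g : (Fin n → ZMod 2) → ZMod 2) (u : Fin n → ZMod 2) : ℂ :=
  ∑ x : Fin n → ZMod 2, (-1 : ℂ) ^ ((g x + ip u x).val)

/-- Generalized Walsh–Hadamard transform of `f : 𝔽₂ⁿ → ℤ_q`. -/
noncomputable def GWT {n : ℕ} (q : ℕ) [NeZero q] (f : (Fin n → ZMod 2) → ZMod q)
    (u : Fin n → ZMod 2) : ℂ :=
  ∑ x : Fin n → ZMod 2,
    Complex.exp (2 * Real.pi * Complex.I * ((f x).val : ℂ) / (q : ℂ)) *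
      (-1 : ℂ) ^ ((ip u x).val)

/-! Since `a₁(x) ∈ {0, 1}`, `i ^ a₁ = (1 + i) / 2 + (1 - i) / 2 * (-1) ^ a₁`, and `i ^ (2 a₂) = (-1) ^ a₂`;
hence `H_f(u) = (1 + i) / 2 * W_{a₂}(u) + (1 - i) / 2 * W_{a₁ ⊕ a₂}(u)`. Both Walsh values are real
of absolute value `2 ^ (n / 2)`, and for real `a, b` this combination `(a + b) / 2 + (a - b) / 2 * i`
has squared modulus `(a ^ 2 + b ^ 2) / 2`. -/

lemma exp_two_pi_I_mul_div_four (v : ℕ) :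
    exp (2 * Real.pi * I * v / 4) = I ^ v := by
  rw [show 2 * Real.pi * I * v / 4 = v * (Real.pi / 2 * I) by ring, exp_nat_mul,
    exp_pi_div_two_mul_I]

lemma neg_one_pow_val_add {R : Type*} [Ring R] (a b : ZMod 2) :
    (-1 : R) ^ (a + b).val = (-1) ^ a.val * (-1) ^ b.val := by
  rw [ZMod.val_add, ← neg_one_pow_eq_pow_mod_two, pow_add]

lemma val_natCast_add_two_mul_natCast (a b : ZMod 2) :
    ((a.val : ZMod 4) + 2 * (b.val : ZMod 4)).val = a.val + 2 * b.val := by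
  decide +revert

lemma I_pow_val (a : ZMod 2) : I ^ a.val = (1 + I) / 2 + (1 - I) / 2 * (-1) ^ a.val := by
  obtain rfl | rfl : a = 0 ∨ a = 1 := by decide +revert
  all_goals simp [ZMod.val_one]; ring

lemma I_pow_val_add_two_mul (e₁ e₂ e₃ : ZMod 2) :
    I ^ ((e₁.val : ZMod 4) + 2 * (e₂.val : ZMod 4)).val * (-1 : ℂ) ^ e₃.val =
      (1 + I) / 2 * (-1 : ℂ) ^ (e₂ + e₃).val + (1 - I) / 2 * (-1 : ℂ) ^ (e₁ + e₂ + e₃).val := by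
  rw [val_natCast_add_two_mul_natCast, pow_add, pow_mul, I_sq, I_pow_val, neg_one_pow_val_add,
    neg_one_pow_val_add, neg_one_pow_val_add]
  ring

lemma GWT_four_eq {n : ℕ} (a₁ a₂ : (Fin n → ZMod 2) → ZMod 2) (u : Fin n → ZMod 2) :
    GWT 4 (fun x => ((a₁ x).val : ZMod 4) + 2 * ((a₂ x).val : ZMod 4)) u =
      (1 + I) / 2 * WHT a₂ u + (1 - I) / 2 * WHT (fun x => a₁ x + a₂ x) u := by
  simp only [GWT, WHT, mul_sum, ← sum_add_distrib]
  refine sum_congr rfl fun x _ => ?_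
  rw [Nat.cast_ofNat, exp_two_pi_I_mul_div_four, I_pow_val_add_two_mul]

lemma WHT_eq_ofReal {n : ℕ} (g : (Fin n → ZMod 2) → ZMod 2) (u : Fin n → ZMod 2) :
    WHT g u = ((∑ x, (-1 : ℝ) ^ (g x + ip u x).val : ℝ) : ℂ) := by
  simp [WHT]

lemma norm_one_add_I_mul_add_one_sub_I_mul {a b c : ℝ} (ha : |a| = c) (hb : |b| = c) :
    ‖(1 + I) / 2 * a + (1 - I) / 2 * b‖ = c := by
  have hc : 0 ≤ c := ha ▸ abs_nonneg a
  have hz : (1 + I) / 2 * a + (1 - I) / 2 * b = ((a + b) / 2 : ℝ) + ((a - b) / 2 : ℝ) * I := by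
    push_cast; ring
  have ha2 : a ^ 2 = c ^ 2 := by rw [← sq_abs, ha]
  have hb2 : b ^ 2 = c ^ 2 := by rw [← sq_abs, hb]
  rw [← sq_eq_sq₀ (norm_nonneg _) hc, Complex.sq_norm, hz, normSq_add_mul_I]
  linear_combination (ha2 + hb2) / 2

theorem gbent_z4_of_components_bent_general (n : ℕ)
    (a1 a2 : (Fin n → ZMod 2) → ZMod 2) (f : (Fin n → ZMod 2) → ZMod 4)
    (hf : ∀ x, f x = ((a1 x).val : ZMod 4) + 2 * ((a2 x).val : ZMod 4))
    (h2 : ∀ u, ‖WHT a2 u‖ = 2 ^ (n / 2))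
    (h12 : ∀ u, ‖WHT (fun x => a1 x + a2 x) u‖ = 2 ^ (n / 2)) :
    ∀ u, ‖GWT 4 f u‖ = 2 ^ (n / 2) := by
  intro u
  obtain rfl : f = fun x => ((a1 x).val : ZMod 4) + 2 * ((a2 x).val : ZMod 4) := funext hf
  have hA := h2 u
  have hB := h12 u
  rw [WHT_eq_ofReal, norm_real, Real.norm_eq_abs] at hA hB
  rw [GWT_four_eq, WHT_eq_ofReal, WHT_eq_ofReal]
  exact norm_one_add_I_mul_add_one_sub_I_mul hA hB

theorem gbent_z4_of_components_bent (n : ℕ) (hn : Even n)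
    (a1 a2 : (Fin n → ZMod 2) → ZMod 2) (f : (Fin n → ZMod 2) → ZMod 4)
    (hf : ∀ x, f x = ((a1 x).val : ZMod 4) + 2 * ((a2 x).val : ZMod 4))
    (h2 : ∀ u, ‖WHT a2 u‖ = 2 ^ (n / 2))
    (h12 : ∀ u, ‖WHT (fun x => a1 x + a2 x) u‖ = 2 ^ (n / 2)) :
    ∀ u, ‖GWT 4 f u‖ = 2 ^ (n / 2) :=
  gbent_z4_of_components_bent_general n a1 a2 f hf h2 h12
end

section
/- Let n = 2m and f : 𝔽₂ⁿ → ℤ_{2^k}, and suppose for every u ∈ 𝔽₂ⁿ, with b_j^{(u)} = #{x : f(x) + 2^{k−1}(u·x) = j}, there exists ρ_u ∈ {0, …, 2^{k−1}−1} with b^{(u)}_{2^{k−1}+ρ_u} = b^{(u)}_{ρ_u} ± 2^m and b^{(u)}_{2^{k−1}+j} = b^{(u)}_j for all other j in {0,…,2^{k−1}−1}. Then f is gbent: |H_f(u)| = 2^m for every u. -/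
open Finset Complex

/-! With `ζ = exp (2πi / 2^k)` (so `ζ ^ j` is `ZMod.stdAddChar j`) and `N = 2^(k-1)` we have
`ζ ^ N = -1`, so `(-1)^(u·x) = ζ ^ (N (u·x))` and `H_f(u) = ∑_{j < 2N} b_j ζ^j`. Since
`ζ ^ (N + j) = -ζ ^ j`, this folds to `∑_{j < N} (b_j - b_{N+j}) ζ^j`, where only the term
`j = ρ` survives; its modulus is `|b_ρ - b_{N+ρ}| = 2^m`. -/

open Function

section ValueDistribution

variable {α R : Type*} [Fintype α] [CommSemiring R] {q : ℕ} [NeZero q]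

theorem sum_comp_eq_sum_range_card_mul (g : α → ZMod q) (F : ZMod q → R) :
    ∑ x, F (g x) = ∑ j ∈ range q, (#{x | g x = j} : R) * F j := by
  rw [← sum_fiberwise_of_maps_to (g := fun x => (g x).val) (t := range q)
    fun x _ => mem_range.mpr (ZMod.val_lt _)]
  refine sum_congr rfl fun j hj => ?_
  have hfiber : ∀ x, (g x).val = j ↔ g x = j := fun x => by
    constructor
    · rintro rfl
      exact (ZMod.natCast_zmod_val _).symm
    · rintro h
      rw [h, ZMod.val_cast_of_lt (mem_range.mp hj)]
  have hconst : ∀ x ∈ univ.filter (fun x => (g x).val = j), F (g x) = F j :=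
    fun x hx => by rw [(hfiber x).mp (mem_filter.mp hx).2]
  rw [sum_congr rfl hconst, sum_const, nsmul_eq_mul, filter_congr fun x _ => hfiber x]

end ValueDistribution

section Folding

variable {R : Type*} [CommRing R] {q N : ℕ}

theorem sum_range_two_mul_eq_of_antiperiodic (hq : q = 2 * N) (b F : ℕ → R)
    (hF : Antiperiodic F N) :
    ∑ j ∈ range q, b j * F j = ∑ j ∈ range N, (b j - b (N + j)) * F j := by
  rw [hq, two_mul, sum_range_add, ← sum_add_distrib]
  refine sum_congr rfl fun j _ => ?_
  rw [add_comm N j, hF j]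
  ring

theorem sum_range_two_mul_eq_single_of_antiperiodic (hq : q = 2 * N) (b F : ℕ → R)
    (hF : Antiperiodic F N) {ρ : ℕ} (hρ : ρ < N) (hb : ∀ j < N, j ≠ ρ → b (N + j) = b j) :
    ∑ j ∈ range q, b j * F j = (b ρ - b (N + ρ)) * F ρ := by
  rw [sum_range_two_mul_eq_of_antiperiodic hq b F hF]
  refine sum_eq_single_of_mem ρ (mem_range.mpr hρ) fun j hj hjρ => ?_
  rw [hb j (mem_range.mp hj) hjρ, sub_self, zero_mul]

end Folding

section StdAddChar

variable {q N : ℕ} [NeZero q]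

theorem stdAddChar_natCast_half (hq : q = 2 * N) :
    ZMod.stdAddChar (N : ZMod q) = -1 := by
  have hN : (N : ℂ) ≠ 0 := Nat.cast_ne_zero.mpr fun hN => NeZero.ne q (by omega)
  rw [ZMod.stdAddChar_apply, ZMod.toCircle_natCast, hq, ← Complex.exp_pi_mul_I]
  congr 1
  push_cast
  field_simp

theorem antiperiodic_stdAddChar_natCast (hq : q = 2 * N) :
    Antiperiodic (fun j : ℕ => ZMod.stdAddChar (j : ZMod q)) N := fun j => by
  dsimp only
  rw [Nat.cast_add, AddChar.map_add_eq_mul, stdAddChar_natCast_half hq, mul_neg_one]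

theorem GWT_eq_sum_stdAddChar {n : ℕ} (hq : q = 2 * N) (f : (Fin n → ZMod 2) → ZMod q)
    (u : Fin n → ZMod 2) :
    GWT q f u = ∑ x, ZMod.stdAddChar (f x + ((N * (ip u x).val : ℕ) : ZMod q)) := by
  refine sum_congr rfl fun x _ => ?_
  have hsmul : ((N * (ip u x).val : ℕ) : ZMod q) = (ip u x).val • (N : ZMod q) := by
    rw [nsmul_eq_mul, Nat.cast_mul, mul_comm]
  rw [hsmul, AddChar.map_add_eq_mul, AddChar.map_nsmul_eq_pow, stdAddChar_natCast_half hq,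
    ZMod.stdAddChar_apply, ZMod.toCircle_apply]

end StdAddChar

theorem gbent_of_value_distribution (m k : ℕ) (hk : 1 ≤ k)
    (f : (Fin (2 * m) → ZMod 2) → ZMod (2 ^ k))
    (hdist : ∀ u : Fin (2 * m) → ZMod 2,
      ∃ ρ : ℕ, ρ ≤ 2 ^ (k - 1) - 1 ∧
        ((fun b : ℕ → ℤ =>
          (b (2 ^ (k - 1) + ρ) = b ρ + 2 ^ m ∨ b (2 ^ (k - 1) + ρ) = b ρ - 2 ^ m) ∧
          ∀ j : ℕ, j ≤ 2 ^ (k - 1) - 1 → j ≠ ρ → b (2 ^ (k - 1) + j) = b j)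
         (fun j => ((Finset.univ.filter
            (fun x : Fin (2 * m) → ZMod 2 =>
              f x + ((2 ^ (k - 1) * (ip u x).val : ℕ) : ZMod (2 ^ k)) = (j : ZMod (2 ^ k)))).card : ℤ)))) :
    ∀ u, ‖GWT (2 ^ k) f u‖ = 2 ^ m := by
  intro u
  obtain ⟨ρ, hρ, hjump, hflat⟩ := hdist u
  beta_reduce at hjump hflat
  have hq : 2 ^ k = 2 * 2 ^ (k - 1) := by
    rw [← pow_succ']
    congr 1
    omega
  have hN : 0 < 2 ^ (k - 1) := by positivity
  rw [GWT_eq_sum_stdAddChar hq, sum_comp_eq_sum_range_card_mul,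
    sum_range_two_mul_eq_single_of_antiperiodic hq _ _ (antiperiodic_stdAddChar_natCast hq)
      (ρ := ρ) (by omega) fun j hj hjρ => by exact_mod_cast hflat j (by omega) hjρ,
    norm_mul, ZMod.stdAddChar_apply, Circle.norm_coe, mul_one, ← Int.cast_natCast,
    ← Int.cast_natCast (R := ℂ), ← Int.cast_sub, Complex.norm_intCast]
  rcases hjump with h | h <;> rw [h] <;> simp
end

section
/- Let n be odd and f : 𝔽₂ⁿ → ℤ₈, f(x) = a₁(x) + 2a₂(x) + 4a₃(x), be gbent. Suppose that for each u ∈ 𝔽₂ⁿ either W_{a₃}(u) = W_{a₁⊕a₃}(u) = 0 and |W_{a₂⊕a₃}(u)| = |W_{a₁⊕a₂⊕a₃}(u)| = 2^{(n+1)/2}, or |W_{a₃}(u)| = |W_{a₁⊕a₃}(u)| = 2^{(n+1)/2} and W_{a₂⊕a₃}(u) = W_{a₁⊕a₂⊕a₃}(u) = 0. Then the Gray image ψ(f)(x, y₁, y₂) = y₁a₁(x) ⊕ y₂a₂(x) ⊕ a₃(x) is a semibent Boolean function on 𝔽₂^{n+2}, i.e., its Walsh–Hadamard transform takes only values in {0,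 ±2^{(n+3)/2}}. -/
open Finset Complex

/-- Walsh–Hadamard transform on `𝔽₂ⁿ × 𝔽₂ × 𝔽₂`. -/
noncomputable def WHT3 {n : ℕ} (F : (Fin n → ZMod 2) × ZMod 2 × ZMod 2 → ZMod 2)
    (u : Fin n → ZMod 2) (v1 v2 : ZMod 2) : ℂ :=
  ∑ z : (Fin n → ZMod 2) × ZMod 2 × ZMod 2,
    (-1 : ℂ) ^ ((F z + ip u z.1 + v1 * z.2.1 + v2 * z.2.2).val)


/-! The Walsh transform of the Gray image splits, over `(y₁, y₂) ∈ 𝔽₂²`, into the signed sum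
`W_{a₃} + (-1)^{v₁} W_{a₁⊕a₃} + (-1)^{v₂} W_{a₂⊕a₃} + (-1)^{v₁⊕v₂} W_{a₁⊕a₂⊕a₃}`.
Under either alternative of the hypothesis two of these terms vanish and the other two are
`±2^{(n+1)/2}` (a Walsh value is an integer, so its norm fixes it up to sign); a signed sum of two
such numbers is `0` or `±2^{(n+3)/2}`. -/

noncomputable def chi (a : ZMod 2) : ℂ := (-1 : ℂ) ^ a.val

lemma chi_zero : chi 0 = 1 := by simp [chi]

lemma chi_add (a b : ZMod 2) : chi (a + b) = chi a * chi b := by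
  unfold chi
  rw [ZMod.val_add, ← pow_add, ← Nat.mod_add_div (a.val + b.val) 2, pow_add, pow_mul]
  simp

lemma chi_eq_one_or_neg_one (a : ZMod 2) : chi a = 1 ∨ chi a = -1 := by
  rcases Nat.even_or_odd a.val with h | h
  · exact Or.inl h.neg_one_pow
  · exact Or.inr h.neg_one_pow

lemma sum_zmod_two {M : Type*} [AddCommMonoid M] (h : ZMod 2 → M) : ∑ y, h y = h 0 + h 1 :=
  Fin.sum_univ_two h

lemma exists_intCast_eq_WHT {n : ℕ} (g : (Fin n → ZMod 2) → ZMod 2) (u : Fin n → ZMod 2) :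
    ∃ r : ℤ, WHT g u = r :=
  ⟨∑ x, (-1 : ℤ) ^ (g x + ip u x).val, by simp [WHT]⟩

lemma WHT_eq_or_eq_neg_of_norm_eq {n : ℕ} {g : (Fin n → ZMod 2) → ZMod 2}
    {u : Fin n → ZMod 2} {t : ℝ} (ht : 0 ≤ t) (h : ‖WHT g u‖ = t) :
    WHT g u = t ∨ WHT g u = -t := by
  obtain ⟨r, hr⟩ := exists_intCast_eq_WHT g u
  rw [hr, Complex.norm_intCast] at h
  rw [hr]
  rcases (abs_eq ht).1 h with h | h
  · exact Or.inl (by exact_mod_cast h)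
  · exact Or.inr (by exact_mod_cast h)

lemma WHT3_grayImage {n : ℕ} (a1 a2 a3 : (Fin n → ZMod 2) → ZMod 2)
    (u : Fin n → ZMod 2) (v1 v2 : ZMod 2) :
    WHT3 (fun z => z.2.1 * a1 z.1 + z.2.2 * a2 z.1 + a3 z.1) u v1 v2 =
      WHT a3 u + chi v1 * WHT (fun x => a1 x + a3 x) u
        + chi v2 * WHT (fun x => a2 x + a3 x) u
        + chi (v1 + v2) * WHT (fun x => a1 x + a2 x + a3 x) u := by
  simp only [WHT3, WHT, Fintype.sum_prod_type, Finset.mul_sum, ← Finset.sum_add_distrib]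
  refine Finset.sum_congr rfl fun x _ => ?_
  simp only [← chi.eq_def, sum_zmod_two, zero_mul, one_mul, mul_zero, mul_one, chi_add, chi_zero]
  ring

lemma mul_add_mul_eq_zero_or_two_mul_or_neg {R : Type*} [CommRing R] {c d x y t : R}
    (hc : c = 1 ∨ c = -1) (hd : d = 1 ∨ d = -1) (hx : x = t ∨ x = -t) (hy : y = t ∨ y = -t) :
    c * x + d * y = 0 ∨ c * x + d * y = 2 * t ∨ c * x + d * y = -(2 * t) := by
  rcases hc with rfl | rfl <;> rcases hd with rfl | rfl <;> rcases hx with rfl | rfl <;>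
    rcases hy with rfl | rfl <;> ring_nf <;> simp

theorem gray_image_semibent_z8_general (n : ℕ) (hn : Odd n)
    (a1 a2 a3 : (Fin n → ZMod 2) → ZMod 2)
    (hcases : ∀ u,
      (WHT a3 u = 0 ∧ WHT (fun x => a1 x + a3 x) u = 0 ∧
        ‖WHT (fun x => a2 x + a3 x) u‖ = 2 ^ ((n + 1) / 2) ∧
        ‖WHT (fun x => a1 x + a2 x + a3 x) u‖ = 2 ^ ((n + 1) / 2)) ∨
      (‖WHT a3 u‖ = 2 ^ ((n + 1) / 2) ∧
        ‖WHT (fun x => a1 x + a3 x) u‖ = 2 ^ ((n + 1) / 2) ∧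
        WHT (fun x => a2 x + a3 x) u = 0 ∧
        WHT (fun x => a1 x + a2 x + a3 x) u = 0)) :
    ∀ (u : Fin n → ZMod 2) (v1 v2 : ZMod 2),
      WHT3 (fun z => z.2.1 * a1 z.1 + z.2.2 * a2 z.1 + a3 z.1) u v1 v2 = 0 ∨
      WHT3 (fun z => z.2.1 * a1 z.1 + z.2.2 * a2 z.1 + a3 z.1) u v1 v2 = 2 ^ ((n + 3) / 2) ∨
      WHT3 (fun z => z.2.1 * a1 z.1 + z.2.2 * a2 z.1 + a3 z.1) u v1 v2 = -2 ^ ((n + 3) / 2) := by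
  intro u v1 v2
  have hexp : (2 : ℂ) ^ ((n + 3) / 2) = 2 * ((2 ^ ((n + 1) / 2) : ℝ) : ℂ) := by
    obtain ⟨k, rfl⟩ := hn
    rw [show (2 * k + 1 + 3) / 2 = (2 * k + 1 + 1) / 2 + 1 by omega]
    push_cast
    ring
  have hpos : (0 : ℝ) ≤ 2 ^ ((n + 1) / 2) := by positivity
  rw [WHT3_grayImage, hexp]
  rcases hcases u with ⟨h0, h1, h2, h3⟩ | ⟨h0, h1, h2, h3⟩
  · simp only [h0, h1, mul_zero, add_zero, zero_add]
    exact mul_add_mul_eq_zero_or_two_mul_or_neg (chi_eq_one_or_neg_one v2)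
      (chi_eq_one_or_neg_one (v1 + v2)) (WHT_eq_or_eq_neg_of_norm_eq hpos h2)
      (WHT_eq_or_eq_neg_of_norm_eq hpos h3)
  · simp only [h2, h3, mul_zero, add_zero]
    rw [← one_mul (WHT a3 u)]
    exact mul_add_mul_eq_zero_or_two_mul_or_neg (Or.inl rfl) (chi_eq_one_or_neg_one v1)
      (WHT_eq_or_eq_neg_of_norm_eq hpos h0) (WHT_eq_or_eq_neg_of_norm_eq hpos h1)

theorem gray_image_semibent_z8 (n : ℕ) (hn : Odd n)
    (a1 a2 a3 : (Fin n → ZMod 2) → ZMod 2) (f : (Fin n → ZMod 2) → ZMod 8)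
    (hf : ∀ x, f x = ((a1 x).val : ZMod 8) + 2 * ((a2 x).val : ZMod 8)
        + 4 * ((a3 x).val : ZMod 8))
    (hgb : ∀ u, ‖GWT 8 f u‖ = Real.sqrt (2 ^ n))
    (hcases : ∀ u,
      (WHT a3 u = 0 ∧ WHT (fun x => a1 x + a3 x) u = 0 ∧
        ‖WHT (fun x => a2 x + a3 x) u‖ = 2 ^ ((n + 1) / 2) ∧
        ‖WHT (fun x => a1 x + a2 x + a3 x) u‖ = 2 ^ ((n + 1) / 2)) ∨
      (‖WHT a3 u‖ = 2 ^ ((n + 1) / 2) ∧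
        ‖WHT (fun x => a1 x + a3 x) u‖ = 2 ^ ((n + 1) / 2) ∧
        WHT (fun x => a2 x + a3 x) u = 0 ∧
        WHT (fun x => a1 x + a2 x + a3 x) u = 0)) :
    ∀ (u : Fin n → ZMod 2) (v1 v2 : ZMod 2),
      WHT3 (fun z => z.2.1 * a1 z.1 + z.2.2 * a2 z.1 + a3 z.1) u v1 v2 = 0 ∨
      WHT3 (fun z => z.2.1 * a1 z.1 + z.2.2 * a2 z.1 + a3 z.1) u v1 v2 = 2 ^ ((n + 3) / 2) ∨
      WHT3 (fun z => z.2.1 * a1 z.1 + z.2.2 * a2 z.1 + a3 z.1) u v1 v2 = -2 ^ ((n + 3) / 2) :=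
  gray_image_semibent_z8_general n hn a1 a2 a3 hcases
end
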